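/- Let X = ⋃_{λ∈Λ} U_λ be an open cover and A a small filtered category. Let ((V^λ)_λ, (θ_{λμ})_{λ,μ}) and ((V'^λ)_λ, (θ'_{λμ})_{λ,μ}) be two families of degree-weight-graded VSA-inductive sheaves on the U_λ over A, with strict gluing isomorphisms satisfying the cocycle conditions and the gluing hypotheses (1)–(5), glued respectively into (V, (Φ^λ)_λ) and (V', (Φ'^λ)_λ). Let (F^λ : V^λ → V'^λ)_{λ∈Λ} be morphisms of the underlying ind-objects of sheaves with θ'_{λμ}∘(F^μ|_{U_μ∩U_λ}) = (F^λ|_{U_λ∩U_μ})∘θ_{λμ} for all λ, μ, and suppose there exist a map j_F : Ob(A) → Ob(A) and sheaf morphisms F^{λ,j_F(α)}_α with F^λ = ([F^{λ,j_F(α)}_α])_α for all λ. Then there exists a unique morphism of ind-objects F : V → V', represented by a family of sheaf morphisms with the same index map j_F, such that Φ'^λ∘(F|_{U_λ}) = F^λ∘Φ^λ for every λ ∈ Λ. Moreover, if every F^λ is a morphism of VSA-inductive sheaves, then so is F. -/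
import Mathlib


open scoped BigOperators

/-- A vertex superalgebra over a field `K` (`K = ℝ` or `ℂ` in the applications).
The super structure is encoded by the parity involution `inv` (identity on even
vectors, minus identity on odd vectors).  `nth k` is the `k`-th product
`A ⊗ B ↦ A_{(k)}B`, `vac` is the vacuum and `T` the translation operator.
The axioms are: truncation (fields), the vacuum axiom, the translation axiom, and
locality of the fields `Y(A,z)` with respect to supercommutators. -/
structure VSA (K : Type*) [Field K] (V : Type*) [AddCommGroup V] [Module K V] where
  vac : V
  T : Module.End K V
  nth : ℤ → V →ₗ[K] V →ₗ[K] V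
  inv : Module.End K V
  inv_inv : inv * inv = 1
  inv_vac : inv vac = vac
  inv_T : inv * T = T * inv
  inv_nth : ∀ (k : ℤ) (a b : V), inv (nth k a b) = nth k (inv a) (inv b)
  trunc : ∀ a b : V, ∃ N : ℤ, ∀ k : ℤ, N ≤ k → nth k a b = 0
  vac_nth : ∀ (k : ℤ) (a : V), nth k vac a = if k = -1 then a else 0
  nth_vac : ∀ (k : ℤ) (a : V), 0 ≤ k → nth k a vac = 0
  nth_neg_one_vac : ∀ a : V, nth (-1) a vac = a
  T_vac : T vac = 0
  nth_T : ∀ (k : ℤ) (a b : V), nth k (T a) b = (-k) • nth (k - 1) a b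
  T_deriv : ∀ (k : ℤ) (a b : V), T (nth k a b) = nth k (T a) b + nth k a (T b)
  locality : ∀ (pa pb : Bool) (a b : V),
    (inv a = if pa then -a else a) → (inv b = if pb then -b else b) →
    ∃ N : ℕ, ∀ (p q : ℤ) (x : V),
      ∑ i ∈ Finset.range (N + 1), ((-1 : ℤ) ^ i * (N.choose i : ℤ)) •
        (nth (p + (N : ℤ) - (i : ℤ)) a (nth (q + (i : ℤ)) b x)
          - (if pa && pb then (-1 : ℤ) else 1) •
              nth (q + (i : ℤ)) b (nth (p + (N : ℤ) - (i : ℤ)) a x)) = 0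

namespace VSA

variable {K : Type*} [Field K] {V : Type*} [AddCommGroup V] [Module K V]
variable {W : Type*} [AddCommGroup W] [Module K W]

/-- `a` is homogeneous of parity `p` (`p = false` : even, `p = true` : odd). -/
def Homog (𝒱 : VSA K V) (p : Bool) (a : V) : Prop := 𝒱.inv a = if p then -a else a

/-- The elements of the vertex subalgebra generated by a subset `S`:
the smallest subspace containing `S` and the vacuum and closed under all
`n`-th products. -/
inductive GenBy (𝒱 : VSA K V) (S : Set V) : V → Prop
  | of {v : V} : v ∈ S → GenBy 𝒱 S v
  | vac : GenBy 𝒱 S 𝒱.vac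
  | zero : GenBy 𝒱 S 0
  | add {a b : V} : GenBy 𝒱 S a → GenBy 𝒱 S b → GenBy 𝒱 S (a + b)
  | smul (c : K) {a : V} : GenBy 𝒱 S a → GenBy 𝒱 S (c • a)
  | nthprod (k : ℤ) {a b : V} : GenBy 𝒱 S a → GenBy 𝒱 S b → GenBy 𝒱 S (𝒱.nth k a b)

/-- The vertex subalgebra generated by `S`, as a submodule. -/
def genSub (𝒱 : VSA K V) (S : Set V) : Submodule K V where
  carrier := {x | GenBy 𝒱 S x}
  add_mem' := fun h1 h2 => GenBy.add h1 h2
  zero_mem' := GenBy.zero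
  smul_mem' := fun c _ h => GenBy.smul c h

/-- A morphism of vertex superalgebras: an even linear map preserving the vacuum,
the translation operator and all `n`-th products. -/
def IsHom (𝒱 : VSA K V) (𝒲 : VSA K W) (f : V →ₗ[K] W) : Prop :=
  f 𝒱.vac = 𝒲.vac ∧ (∀ x, f (𝒱.T x) = 𝒲.T (f x)) ∧
    (∀ (k : ℤ) (a b : V), f (𝒱.nth k a b) = 𝒲.nth k (f a) (f b)) ∧
    (∀ x, f (𝒱.inv x) = 𝒲.inv (f x))

end VSA

open TopologicalSpace

universe u

/-- The data of a (strictly represented) degree-weight-graded VSA-inductive sheaf on a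
topological space `X`, indexed by a small filtered category `A` (here, by hypothesis
(1) of the gluing proposition, a total preorder):  a presheaf `sec` of vertex
superalgebras (the inductive limit of the inductive system) together with the
`A`-indexed exhausting filtration `filt` by the levels of the inductive system, each of
which is a sheaf of super vector spaces, and the degree-weight bigrading `comp`
(eigenspace decomposition of the Hamiltonian and the degree-grading operator).  The
axioms, relative to a base open set `U₀`, are recorded in `IsStrOn`. -/
structure StrData (K : Type u) [Field K] (X : Type u) [TopologicalSpace X]
    (A : Type u) [Preorder A] : Type (u + 1) where
  sec : Opens X → Type u
  [acg : ∀ V, AddCommGroup (sec V)]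
  [mod : ∀ V, Module K (sec V)]
  res : ∀ ⦃V W : Opens X⦄, W ≤ V → sec V →ₗ[K] sec W
  vsa : ∀ V, VSA K (sec V)
  filt : A → ∀ V : Opens X, Submodule K (sec V)
  comp : ℤ × ℤ → ∀ V : Opens X, Submodule K (sec V)

attribute [instance] StrData.acg StrData.mod

variable {K : Type u} [Field K] {X : Type u} [TopologicalSpace X] {A : Type u} [Preorder A]

/-- The axioms of a degree-weight-graded VSA-inductive sheaf on the open subset `U₀`,
with vacuum represented at the index `α₀`, translation represented with index map `jT`
and `n`-th products represented with index maps `jn` (hypotheses (2)–(4) of the gluing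
proposition). -/
structure IsStrOn (α₀ : A) (jT : A → A) (jn : ℤ → A → A → A)
    (U₀ : Opens X) (S : StrData K X A) : Prop where
  res_refl : ∀ (V : Opens X) (x : S.sec V), S.res (le_refl V) x = x
  res_res : ∀ (V₁ V₂ V₃ : Opens X) (h₂ : V₂ ≤ V₁) (h₃ : V₃ ≤ V₂) (x : S.sec V₁),
    S.res h₃ (S.res h₂ x) = S.res (h₃.trans h₂) x
  res_vac : ∀ (V₁ V₂ : Opens X) (h : V₂ ≤ V₁), V₁ ≤ U₀ →
    S.res h (S.vsa V₁).vac = (S.vsa V₂).vac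
  res_T : ∀ (V₁ V₂ : Opens X) (h : V₂ ≤ V₁), V₁ ≤ U₀ → ∀ x : S.sec V₁,
    S.res h ((S.vsa V₁).T x) = (S.vsa V₂).T (S.res h x)
  res_nth : ∀ (V₁ V₂ : Opens X) (h : V₂ ≤ V₁), V₁ ≤ U₀ → ∀ (k : ℤ) (x y : S.sec V₁),
    S.res h ((S.vsa V₁).nth k x y) = (S.vsa V₂).nth k (S.res h x) (S.res h y)
  res_inv : ∀ (V₁ V₂ : Opens X) (h : V₂ ≤ V₁), V₁ ≤ U₀ → ∀ x : S.sec V₁,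
    S.res h ((S.vsa V₁).inv x) = (S.vsa V₂).inv (S.res h x)
  -- the filtration by the (injective) inductive system
  filt_mono : ∀ {a b : A}, a ≤ b → ∀ V : Opens X, V ≤ U₀ → S.filt a V ≤ S.filt b V
  filt_exhaust : ∀ V : Opens X, V ≤ U₀ → ∀ x : S.sec V, ∃ a : A, x ∈ S.filt a V
  filt_res : ∀ (a : A) (V₁ V₂ : Opens X) (h : V₂ ≤ V₁), V₁ ≤ U₀ →
    ∀ x ∈ S.filt a V₁, S.res h x ∈ S.filt a V₂
  -- each level of the inductive system is a sheaf of super vector spaces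
  filt_sep : ∀ (a : A) (V : Opens X), V ≤ U₀ → ∀ {ι : Type u} (Wc : ι → Opens X)
    (hW : ∀ i, Wc i ≤ V), V ≤ iSup Wc →
    ∀ x y : S.sec V, x ∈ S.filt a V → y ∈ S.filt a V →
    (∀ i, S.res (hW i) x = S.res (hW i) y) → x = y
  filt_glue : ∀ (a : A) (V : Opens X), V ≤ U₀ → ∀ {ι : Type u} (Wc : ι → Opens X)
    (hW : ∀ i, Wc i ≤ V), V ≤ iSup Wc →
    ∀ s : ∀ i, S.sec (Wc i), (∀ i, s i ∈ S.filt a (Wc i)) →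
    (∀ i i', S.res (inf_le_left : Wc i ⊓ Wc i' ≤ Wc i) (s i)
      = S.res (inf_le_right : Wc i ⊓ Wc i' ≤ Wc i') (s i')) →
    ∃ x : S.sec V, x ∈ S.filt a V ∧ ∀ i, S.res (hW i) x = s i
  -- the vacuum, translation and products are strictly represented at `α₀`, `jT`, `jn`
  vac_filt : ∀ V : Opens X, V ≤ U₀ → (S.vsa V).vac ∈ S.filt α₀ V
  T_filt : ∀ (a : A) (V : Opens X), V ≤ U₀ →
    ∀ x ∈ S.filt a V, (S.vsa V).T x ∈ S.filt (jT a) V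
  nth_filt : ∀ (k : ℤ) (a b : A) (V : Opens X), V ≤ U₀ →
    ∀ x ∈ S.filt a V, ∀ y ∈ S.filt b V, (S.vsa V).nth k x y ∈ S.filt (jn k a b) V
  inv_filt : ∀ (a : A) (V : Opens X), V ≤ U₀ →
    ∀ x ∈ S.filt a V, (S.vsa V).inv x ∈ S.filt a V
  -- the degree-weight bigrading
  comp_res : ∀ (p : ℤ × ℤ) (V₁ V₂ : Opens X) (h : V₂ ≤ V₁), V₁ ≤ U₀ →
    ∀ x ∈ S.comp p V₁, S.res h x ∈ S.comp p V₂
  comp_indep : ∀ (p : ℤ × ℤ) (V : Opens X), V ≤ U₀ →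
    Disjoint (S.comp p V) (⨆ (q : ℤ × ℤ) (_ : q ≠ p), S.comp q V)
  filt_comp_span : ∀ (a : A) (V : Opens X), V ≤ U₀ →
    S.filt a V = ⨆ p : ℤ × ℤ, (S.comp p V ⊓ S.filt a V)
  vac_comp : ∀ V : Opens X, V ≤ U₀ → (S.vsa V).vac ∈ S.comp (0, 0) V
  T_comp : ∀ (p : ℤ × ℤ) (V : Opens X), V ≤ U₀ →
    ∀ x ∈ S.comp p V, (S.vsa V).T x ∈ S.comp (p.1, p.2 + 1) V
  nth_comp : ∀ (p q : ℤ × ℤ) (k : ℤ) (V : Opens X), V ≤ U₀ →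
    ∀ x ∈ S.comp p V, ∀ y ∈ S.comp q V,
      (S.vsa V).nth k x y ∈ S.comp (p.1 + q.1, p.2 + q.2 - k - 1) V

/-- The data of a (strictly represented) morphism between VSA-inductive sheaves. -/
def MorData (S₁ S₂ : StrData K X A) := ∀ V : Opens X, S₁.sec V →ₗ[K] S₂.sec V

/-- `φ` is a (strictly represented) morphism of ind-objects of sheaves on the open
subset `U₀`, with index map `jF` on the levels of the inductive systems. -/
structure IsMorOn (U₀ : Opens X) (jF : A → A) (S₁ S₂ : StrData K X A)
    (φ : MorData S₁ S₂) : Prop where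
  res_comm : ∀ (V₁ V₂ : Opens X) (h : V₂ ≤ V₁), V₁ ≤ U₀ → ∀ x : S₁.sec V₁,
    φ V₂ (S₁.res h x) = S₂.res h (φ V₁ x)
  filt_map : ∀ (a : A) (V : Opens X), V ≤ U₀ →
    ∀ x ∈ S₁.filt a V, φ V x ∈ S₂.filt (jF a) V

/-- `φ` is base-preserving (a morphism of VSA-inductive sheaves) on `U₀`:
it commutes with the vacuum, the translation operator, all `n`-th products, the parity
involution, and preserves the degree-weight bigrading. -/
structure IsVSAMorOn (U₀ : Opens X) (S₁ S₂ : StrData K X A)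
    (φ : MorData S₁ S₂) : Prop where
  map_vac : ∀ V : Opens X, V ≤ U₀ → φ V (S₁.vsa V).vac = (S₂.vsa V).vac
  map_T : ∀ V : Opens X, V ≤ U₀ → ∀ x : S₁.sec V,
    φ V ((S₁.vsa V).T x) = (S₂.vsa V).T (φ V x)
  map_nth : ∀ V : Opens X, V ≤ U₀ → ∀ (k : ℤ) (x y : S₁.sec V),
    φ V ((S₁.vsa V).nth k x y) = (S₂.vsa V).nth k (φ V x) (φ V y)
  map_inv : ∀ V : Opens X, V ≤ U₀ → ∀ x : S₁.sec V,
    φ V ((S₁.vsa V).inv x) = (S₂.vsa V).inv (φ V x)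
  map_comp : ∀ (p : ℤ × ℤ) (V : Opens X), V ≤ U₀ →
    ∀ x ∈ S₁.comp p V, φ V x ∈ S₂.comp p V

/-- `φ` is a strict isomorphism of degree-weight-graded VSA-inductive sheaves on
`U₀`. -/
def IsStrIsoOn (U₀ : Opens X) (S₁ S₂ : StrData K X A) (φ : MorData S₁ S₂) : Prop :=
  IsMorOn U₀ id S₁ S₂ φ ∧ IsVSAMorOn U₀ S₁ S₂ φ ∧
  (∀ V : Opens X, V ≤ U₀ → Function.Bijective (φ V)) ∧
  (∀ (a : A) (V : Opens X), V ≤ U₀ → Submodule.map (φ V) (S₁.filt a V) = S₂.filt a V)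

/-- Auxiliary: subtracting one value of a finitely supported function from its sum. -/
lemma finsupp_sub_single {ι : Type*} {M : Type*} [AddCommGroup M] [DecidableEq ι]
    (f : ι →₀ M) (p : ι) :
    (f.sum fun _ v => v) - f p = ∑ q ∈ f.support.erase p, f q := by
  by_cases hp : p ∈ f.support
  · rw [Finsupp.sum, ← Finset.add_sum_erase _ _ hp, add_sub_cancel_left]
  · rw [Finsupp.notMem_support_iff.mp hp, sub_zero, Finsupp.sum,
      Finset.erase_eq_of_notMem hp]

/-- Auxiliary: the characterizing property of the glued morphism. -/
def GlueP {K : Type u} [Field K] {X : Type u} [TopologicalSpace X]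
    {A : Type u} [Preorder A] {Λ : Type u} (U : Λ → Opens X)
    {S : Λ → StrData K X A} {S' : Λ → StrData K X A} {S₀ S₀' : StrData K X A}
    (Φ : ∀ l, MorData S₀ (S l)) (Φ' : ∀ l, MorData S₀' (S' l))
    (F : ∀ l, MorData (S l) (S' l)) (V : Opens X) (x : S₀.sec V) (y : S₀'.sec V) : Prop :=
  ∀ l : Λ, Φ' l (V ⊓ U l) (S₀'.res inf_le_left y)
    = F l (V ⊓ U l) (Φ l (V ⊓ U l) (S₀.res inf_le_left x))

/-- **gluing of morphisms of VSA-inductive sheaves.**  In the setting of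
the gluing proposition, let `((V^λ), (θ_{λμ}))` and `((V'^λ), (θ'_{λμ}))` be two glued
families of degree-weight-graded VSA-inductive sheaves, glued into `(V, (Φ^λ))` and
`(V', (Φ'^λ))` respectively.  Let `(F^λ : V^λ → V'^λ)` be morphisms of the underlying
ind-objects of sheaves, strictly represented with a common index map `j_F`, compatible
with the gluing isomorphisms: `θ'_{λμ} ∘ F^μ = F^λ ∘ θ_{λμ}`.  Then there is a unique
strict morphism of ind-objects `F : V → V'` (with the same index map `j_F`) such that
`Φ'^λ ∘ F|_{U_λ} = F^λ ∘ Φ^λ` for every `λ`.  Moreover, if every `F^λ` is a morphism of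
VSA-inductive sheaves, then so is `F`. -/
theorem glue_morphisms_of_VSA_inductive_sheaves
    {Λ : Type u}
    (htot : ∀ a b : A, a ≤ b ∨ b ≤ a)
    (U : Λ → Opens X) (hcov : iSup U = ⊤)
    (α₀ : A) (jT : A → A) (jn : ℤ → A → A → A)
    -- the two families of VSA-inductive sheaves with their gluing data
    (S S' : Λ → StrData K X A)
    (hS : ∀ l : Λ, IsStrOn α₀ jT jn (U l) (S l))
    (hS' : ∀ l : Λ, IsStrOn α₀ jT jn (U l) (S' l))
    (θ : ∀ l l' : Λ, MorData (S l') (S l))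
    (hθiso : ∀ l l' : Λ, IsStrIsoOn (U l ⊓ U l') (S l') (S l) (θ l l'))
    (hθrefl : ∀ (l : Λ) (V : Opens X), V ≤ U l → ∀ x : (S l).sec V, θ l l V x = x)
    (hθcoc : ∀ (l l' l'' : Λ) (V : Opens X), V ≤ U l ⊓ U l' ⊓ U l'' →
      ∀ x : (S l'').sec V, θ l l' V (θ l' l'' V x) = θ l l'' V x)
    (θ' : ∀ l l' : Λ, MorData (S' l') (S' l))
    (hθ'iso : ∀ l l' : Λ, IsStrIsoOn (U l ⊓ U l') (S' l') (S' l) (θ' l l'))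
    (hθ'refl : ∀ (l : Λ) (V : Opens X), V ≤ U l → ∀ x : (S' l).sec V, θ' l l V x = x)
    (hθ'coc : ∀ (l l' l'' : Λ) (V : Opens X), V ≤ U l ⊓ U l' ⊓ U l'' →
      ∀ x : (S' l'').sec V, θ' l l' V (θ' l' l'' V x) = θ' l l'' V x)
    -- the glued VSA-inductive sheaves `V` and `V'`
    (S₀ : StrData K X A) (hS₀ : IsStrOn α₀ jT jn ⊤ S₀)
    (Φ : ∀ l : Λ, MorData S₀ (S l))
    (hΦiso : ∀ l : Λ, IsStrIsoOn (U l) S₀ (S l) (Φ l))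
    (hΦθ : ∀ (l l' : Λ) (V : Opens X), V ≤ U l ⊓ U l' → ∀ x : S₀.sec V,
      Φ l V x = θ l l' V (Φ l' V x))
    (S₀' : StrData K X A) (hS₀' : IsStrOn α₀ jT jn ⊤ S₀')
    (Φ' : ∀ l : Λ, MorData S₀' (S' l))
    (hΦ'iso : ∀ l : Λ, IsStrIsoOn (U l) S₀' (S' l) (Φ' l))
    (hΦ'θ : ∀ (l l' : Λ) (V : Opens X), V ≤ U l ⊓ U l' → ∀ x : S₀'.sec V,
      Φ' l V x = θ' l l' V (Φ' l' V x))
    -- the family of morphisms of ind-objects, strictly represented with index map `jF`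
    (jF : A → A)
    (F : ∀ l : Λ, MorData (S l) (S' l))
    (hF : ∀ l : Λ, IsMorOn (U l) jF (S l) (S' l) (F l))
    (hFθ : ∀ (l l' : Λ) (V : Opens X), V ≤ U l ⊓ U l' → ∀ x : (S l').sec V,
      θ' l l' V (F l' V x) = F l V (θ l l' V x)) :
    ∃ F₀ : MorData S₀ S₀',
      (IsMorOn ⊤ jF S₀ S₀' F₀ ∧
        ∀ (l : Λ) (V : Opens X), V ≤ U l → ∀ x : S₀.sec V,
          Φ' l V (F₀ V x) = F l V (Φ l V x)) ∧
      -- uniqueness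
      (∀ F₀' : MorData S₀ S₀',
        (IsMorOn ⊤ jF S₀ S₀' F₀' ∧
          ∀ (l : Λ) (V : Opens X), V ≤ U l → ∀ x : S₀.sec V,
            Φ' l V (F₀' V x) = F l V (Φ l V x)) → F₀' = F₀) ∧
      -- if each `F^λ` is a morphism of VSA-inductive sheaves, then so is `F`
      ((∀ l : Λ, IsVSAMorOn (U l) (S l) (S' l) (F l)) → IsVSAMorOn ⊤ S₀ S₀' F₀) := by
  classical
  -- the restricted cover of any open set
  have hcovV : ∀ V : Opens X, V ≤ ⨆ l, V ⊓ U l := by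
    intro V
    have h : (⨆ l, V ⊓ U l) = V := by rw [← inf_iSup_eq, hcov, inf_top_eq]
    rw [h]
  -- uniqueness of sections satisfying the characterizing property
  have hPuniq : ∀ (V : Opens X) (x : S₀.sec V) (y y' : S₀'.sec V),
      GlueP U Φ Φ' F V x y → GlueP U Φ Φ' F V x y' → y = y' := by
    intro V x y y' hy hy'
    obtain ⟨a, ha⟩ := hS₀'.filt_exhaust V le_top y
    obtain ⟨b, hb⟩ := hS₀'.filt_exhaust V le_top y'
    obtain ⟨c, hac, hbc⟩ : ∃ c, a ≤ c ∧ b ≤ c := by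
      rcases htot a b with h | h
      · exact ⟨b, h, le_rfl⟩
      · exact ⟨a, le_rfl, h⟩
    refine hS₀'.filt_sep c V le_top (fun l => V ⊓ U l) (fun l => inf_le_left)
      (hcovV V) y y' (hS₀'.filt_mono hac V le_top ha) (hS₀'.filt_mono hbc V le_top hb) ?_
    intro l
    exact ((hΦ'iso l).2.2.1 (V ⊓ U l) inf_le_right).1 ((hy l).trans (hy' l).symm)
  -- existence (with filtration control)
  have hPex : ∀ (a : A) (V : Opens X) (x : S₀.sec V), x ∈ S₀.filt a V →
      ∃ y : S₀'.sec V, y ∈ S₀'.filt (jF a) V ∧ GlueP U Φ Φ' F V x y := by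
    intro a V x hx
    have hsmem : ∀ l : Λ, F l (V ⊓ U l) (Φ l (V ⊓ U l) (S₀.res inf_le_left x))
        ∈ (S' l).filt (jF a) (V ⊓ U l) := by
      intro l
      refine (hF l).filt_map a (V ⊓ U l) inf_le_right _ ?_
      exact (hΦiso l).1.filt_map a (V ⊓ U l) inf_le_right _
        (hS₀.filt_res a V (V ⊓ U l) inf_le_left le_top x hx)
    have hts : ∀ l : Λ, ∃ t : S₀'.sec (V ⊓ U l), t ∈ S₀'.filt (jF a) (V ⊓ U l) ∧
        Φ' l (V ⊓ U l) t = F l (V ⊓ U l) (Φ l (V ⊓ U l) (S₀.res inf_le_left x)) := by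
      intro l
      have hm := hsmem l
      rw [← (hΦ'iso l).2.2.2 (jF a) (V ⊓ U l) inf_le_right] at hm
      obtain ⟨t, ht, hφ⟩ := hm
      exact ⟨t, ht, hφ⟩
    choose t ht hφ using hts
    have hcompat : ∀ l l' : Λ,
        S₀'.res (inf_le_left : (V ⊓ U l) ⊓ (V ⊓ U l') ≤ V ⊓ U l) (t l)
          = S₀'.res (inf_le_right : (V ⊓ U l) ⊓ (V ⊓ U l') ≤ V ⊓ U l') (t l') := by
      intro l l'
      have hW2l : (V ⊓ U l) ⊓ (V ⊓ U l') ≤ U l :=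
        le_trans inf_le_left inf_le_right
      have hW2l' : (V ⊓ U l) ⊓ (V ⊓ U l') ≤ U l' :=
        le_trans inf_le_right inf_le_right
      have hW2ll' : (V ⊓ U l) ⊓ (V ⊓ U l') ≤ U l ⊓ U l' := le_inf hW2l hW2l'
      apply ((hΦ'iso l).2.2.1 ((V ⊓ U l) ⊓ (V ⊓ U l')) hW2l).1
      calc Φ' l ((V ⊓ U l) ⊓ (V ⊓ U l')) (S₀'.res inf_le_left (t l))
          = (S' l).res inf_le_left (Φ' l (V ⊓ U l) (t l)) :=
            (hΦ'iso l).1.res_comm (V ⊓ U l) _ inf_le_left inf_le_right (t l)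
        _ = (S' l).res inf_le_left
              (F l (V ⊓ U l) (Φ l (V ⊓ U l) (S₀.res inf_le_left x))) := by
            rw [hφ l]
        _ = F l ((V ⊓ U l) ⊓ (V ⊓ U l'))
              ((S l).res inf_le_left (Φ l (V ⊓ U l) (S₀.res inf_le_left x))) :=
            ((hF l).res_comm (V ⊓ U l) _ inf_le_left inf_le_right _).symm
        _ = F l ((V ⊓ U l) ⊓ (V ⊓ U l'))
              (Φ l _ (S₀.res inf_le_left (S₀.res inf_le_left x))) := by
            rw [(hΦiso l).1.res_comm (V ⊓ U l) _ inf_le_left inf_le_right]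
        _ = F l ((V ⊓ U l) ⊓ (V ⊓ U l'))
              (Φ l _ (S₀.res (le_trans inf_le_left inf_le_left) x)) := by
            rw [hS₀.res_res V (V ⊓ U l) _ inf_le_left inf_le_left]
        _ = F l ((V ⊓ U l) ⊓ (V ⊓ U l'))
              (θ l l' _ (Φ l' _ (S₀.res (le_trans inf_le_left inf_le_left) x))) := by
            rw [← hΦθ l l' _ hW2ll']
        _ = θ' l l' ((V ⊓ U l) ⊓ (V ⊓ U l'))
              (F l' _ (Φ l' _ (S₀.res (le_trans inf_le_left inf_le_left) x))) :=
            (hFθ l l' _ hW2ll' _).symm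
        _ = θ' l l' ((V ⊓ U l) ⊓ (V ⊓ U l'))
              (F l' _ (Φ l' _ (S₀.res inf_le_right (S₀.res inf_le_left x)))) := by
            rw [hS₀.res_res V (V ⊓ U l') _ inf_le_left inf_le_right]
        _ = θ' l l' ((V ⊓ U l) ⊓ (V ⊓ U l'))
              (F l' _ ((S l').res inf_le_right (Φ l' (V ⊓ U l') (S₀.res inf_le_left x)))) := by
            rw [(hΦiso l').1.res_comm (V ⊓ U l') _ inf_le_right inf_le_right]
        _ = θ' l l' ((V ⊓ U l) ⊓ (V ⊓ U l'))
              ((S' l').res inf_le_right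
                (F l' (V ⊓ U l') (Φ l' (V ⊓ U l') (S₀.res inf_le_left x)))) := by
            rw [(hF l').res_comm (V ⊓ U l') _ inf_le_right inf_le_right]
        _ = θ' l l' ((V ⊓ U l) ⊓ (V ⊓ U l'))
              ((S' l').res inf_le_right (Φ' l' (V ⊓ U l') (t l'))) := by rw [hφ l']
        _ = θ' l l' ((V ⊓ U l) ⊓ (V ⊓ U l'))
              (Φ' l' _ (S₀'.res inf_le_right (t l'))) := by
            rw [(hΦ'iso l').1.res_comm (V ⊓ U l') _ inf_le_right inf_le_right]
        _ = Φ' l ((V ⊓ U l) ⊓ (V ⊓ U l')) (S₀'.res inf_le_right (t l')) :=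
            (hΦ'θ l l' _ hW2ll' _).symm
    obtain ⟨y, hyf, hyres⟩ := hS₀'.filt_glue (jF a) V le_top (fun l => V ⊓ U l)
      (fun l => inf_le_left) (hcovV V) t ht hcompat
    refine ⟨y, hyf, fun l => ?_⟩
    exact (congrArg (Φ' l (V ⊓ U l)) (hyres l)).trans (hφ l)
  have hPex' : ∀ (V : Opens X) (x : S₀.sec V), ∃ y, GlueP U Φ Φ' F V x y := by
    intro V x
    obtain ⟨a, ha⟩ := hS₀.filt_exhaust V le_top x
    obtain ⟨y, _, hy⟩ := hPex a V x ha
    exact ⟨y, hy⟩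
  have hadd : ∀ (V : Opens X) (x x' : S₀.sec V) (y y' : S₀'.sec V),
      GlueP U Φ Φ' F V x y → GlueP U Φ Φ' F V x' y' →
      GlueP U Φ Φ' F V (x + x') (y + y') := by
    intro V x x' y y' h h' l
    simp only [map_add, h l, h' l]
  have hsmul : ∀ (V : Opens X) (c : K) (x : S₀.sec V) (y : S₀'.sec V),
      GlueP U Φ Φ' F V x y → GlueP U Φ Φ' F V (c • x) (c • y) := by
    intro V c x y h l
    simp only [map_smul, h l]
  choose F₀fun hF₀P using hPex'
  let F₀ : MorData S₀ S₀' := fun V =>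
    { toFun := F₀fun V
      map_add' := fun x x' => hPuniq V (x + x') _ _ (hF₀P V (x + x'))
        (hadd V x x' _ _ (hF₀P V x) (hF₀P V x'))
      map_smul' := fun c x => hPuniq V (c • x) _ _ (hF₀P V (c • x))
        (hsmul V c x _ (hF₀P V x)) }
  have hP : ∀ (V : Opens X) (x : S₀.sec V), GlueP U Φ Φ' F V x (F₀ V x) :=
    fun V x => hF₀P V x
  have hchar : ∀ (V : Opens X) (x : S₀.sec V) (y : S₀'.sec V),
      GlueP U Φ Φ' F V x y → F₀ V x = y :=
    fun V x y h => hPuniq V x _ y (hP V x) h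
  refine ⟨F₀, ⟨⟨?_, ?_⟩, ?_⟩, ?_, ?_⟩
  · -- res_comm
    intro V₁ V₂ h _ x
    refine hchar V₂ (S₀.res h x) (S₀'.res h (F₀ V₁ x)) ?_
    intro l
    have h' : V₂ ⊓ U l ≤ V₁ ⊓ U l := inf_le_inf h le_rfl
    have key := congrArg ((S' l).res h') (hP V₁ x l)
    rw [← (hΦ'iso l).1.res_comm (V₁ ⊓ U l) (V₂ ⊓ U l) h' inf_le_right,
      ← (hF l).res_comm (V₁ ⊓ U l) (V₂ ⊓ U l) h' inf_le_right,
      ← (hΦiso l).1.res_comm (V₁ ⊓ U l) (V₂ ⊓ U l) h' inf_le_right,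
      hS₀'.res_res V₁ (V₁ ⊓ U l) (V₂ ⊓ U l) inf_le_left h' (F₀ V₁ x),
      hS₀.res_res V₁ (V₁ ⊓ U l) (V₂ ⊓ U l) inf_le_left h' x] at key
    rw [hS₀'.res_res V₁ V₂ (V₂ ⊓ U l) h inf_le_left (F₀ V₁ x),
      hS₀.res_res V₁ V₂ (V₂ ⊓ U l) h inf_le_left x]
    exact key
  · -- filt_map
    intro a V _ x hx
    obtain ⟨y, hyf, hy⟩ := hPex a V x hx
    rw [hchar V x y hy]
    exact hyf
  · -- the commuting property
    intro l V hV x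
    have e1 : ∀ z : (S' l).sec V,
        (S' l).res (le_inf le_rfl hV) ((S' l).res (inf_le_left : V ⊓ U l ≤ V) z) = z := by
      intro z
      rw [(hS' l).res_res V (V ⊓ U l) V inf_le_left (le_inf le_rfl hV) z,
        (hS' l).res_refl]
    calc Φ' l V (F₀ V x)
        = (S' l).res (le_inf le_rfl hV)
            ((S' l).res inf_le_left (Φ' l V (F₀ V x))) := (e1 _).symm
      _ = (S' l).res (le_inf le_rfl hV)
            (Φ' l (V ⊓ U l) (S₀'.res inf_le_left (F₀ V x))) := by
          rw [(hΦ'iso l).1.res_comm V (V ⊓ U l) inf_le_left hV]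
      _ = (S' l).res (le_inf le_rfl hV)
            (F l (V ⊓ U l) (Φ l (V ⊓ U l) (S₀.res inf_le_left x))) := by
          rw [hP V x l]
      _ = (S' l).res (le_inf le_rfl hV)
            ((S' l).res inf_le_left (F l V (Φ l V x))) := by
          rw [← (hF l).res_comm V (V ⊓ U l) inf_le_left hV,
            ← (hΦiso l).1.res_comm V (V ⊓ U l) inf_le_left hV]
      _ = F l V (Φ l V x) := e1 _
  · -- uniqueness
    rintro F₀' ⟨⟨hres', _⟩, hcomm'⟩
    funext V
    apply LinearMap.ext
    intro x
    refine (hchar V x (F₀' V x) ?_).symm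
    intro l
    rw [← hres' V (V ⊓ U l) inf_le_left le_top x]
    exact hcomm' l (V ⊓ U l) inf_le_right (S₀.res inf_le_left x)
  · -- the VSA morphism property
    intro hall
    have hinvcomp : ∀ (l : Λ) (p : ℤ × ℤ) (Vw : Opens X), Vw ≤ U l →
        ∀ t : S₀'.sec Vw, Φ' l Vw t ∈ (S' l).comp p Vw → t ∈ S₀'.comp p Vw := by
      intro l p Vw hVw t hφt
      obtain ⟨b, hb⟩ := hS₀'.filt_exhaust Vw le_top t
      rw [hS₀'.filt_comp_span b Vw le_top,
        Submodule.mem_iSup_iff_exists_finsupp] at hb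
      obtain ⟨f, hf, hsum⟩ := hb
      have hrepr := finsupp_sub_single f p
      rw [hsum] at hrepr
      have h1 : Φ' l Vw (t - f p) ∈ (S' l).comp p Vw := by
        rw [map_sub]
        exact Submodule.sub_mem _ hφt ((hΦ'iso l).2.1.map_comp p Vw hVw _ (hf p).1)
      have h2 : Φ' l Vw (t - f p)
          ∈ ⨆ (q : ℤ × ℤ) (_ : q ≠ p), (S' l).comp q Vw := by
        rw [hrepr, map_sum]
        exact Submodule.sum_mem _ fun q hq => Submodule.mem_iSup_of_mem q
          (Submodule.mem_iSup_of_mem (Finset.ne_of_mem_erase hq)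
            ((hΦ'iso l).2.1.map_comp q Vw hVw _ (hf q).1))
      have h0 : Φ' l Vw (t - f p) = 0 :=
        Submodule.disjoint_def.mp ((hS' l).comp_indep p Vw hVw) _ h1 h2
      have heq : Φ' l Vw t = Φ' l Vw (f p) := by rwa [map_sub, sub_eq_zero] at h0
      rw [((hΦ'iso l).2.2.1 Vw hVw).1 heq]
      exact (hf p).1
    refine ⟨?_, ?_, ?_, ?_, ?_⟩
    · -- vacuum
      intro V _
      refine hchar V (S₀.vsa V).vac (S₀'.vsa V).vac ?_
      intro l
      rw [hS₀'.res_vac V (V ⊓ U l) inf_le_left le_top,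
        hS₀.res_vac V (V ⊓ U l) inf_le_left le_top,
        (hΦ'iso l).2.1.map_vac (V ⊓ U l) inf_le_right,
        (hΦiso l).2.1.map_vac (V ⊓ U l) inf_le_right,
        (hall l).map_vac (V ⊓ U l) inf_le_right]
    · -- translation
      intro V _ x
      refine hchar V ((S₀.vsa V).T x) ((S₀'.vsa V).T (F₀ V x)) ?_
      intro l
      rw [hS₀'.res_T V (V ⊓ U l) inf_le_left le_top,
        hS₀.res_T V (V ⊓ U l) inf_le_left le_top,
        (hΦ'iso l).2.1.map_T (V ⊓ U l) inf_le_right,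
        (hΦiso l).2.1.map_T (V ⊓ U l) inf_le_right,
        (hall l).map_T (V ⊓ U l) inf_le_right,
        hP V x l]
    · -- products
      intro V _ k x x'
      refine hchar V ((S₀.vsa V).nth k x x') ((S₀'.vsa V).nth k (F₀ V x) (F₀ V x')) ?_
      intro l
      rw [hS₀'.res_nth V (V ⊓ U l) inf_le_left le_top,
        hS₀.res_nth V (V ⊓ U l) inf_le_left le_top,
        (hΦ'iso l).2.1.map_nth (V ⊓ U l) inf_le_right,
        (hΦiso l).2.1.map_nth (V ⊓ U l) inf_le_right,
        (hall l).map_nth (V ⊓ U l) inf_le_right,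
        hP V x l, hP V x' l]
    · -- parity
      intro V _ x
      refine hchar V ((S₀.vsa V).inv x) ((S₀'.vsa V).inv (F₀ V x)) ?_
      intro l
      rw [hS₀'.res_inv V (V ⊓ U l) inf_le_left le_top,
        hS₀.res_inv V (V ⊓ U l) inf_le_left le_top,
        (hΦ'iso l).2.1.map_inv (V ⊓ U l) inf_le_right,
        (hΦiso l).2.1.map_inv (V ⊓ U l) inf_le_right,
        (hall l).map_inv (V ⊓ U l) inf_le_right,
        hP V x l]
    · -- the bigrading
      intro p V _ x hx
      have hyloc : ∀ l : Λ,
          S₀'.res (inf_le_left : V ⊓ U l ≤ V) (F₀ V x) ∈ S₀'.comp p (V ⊓ U l) := by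
        intro l
        apply hinvcomp l p (V ⊓ U l) inf_le_right
        rw [hP V x l]
        exact (hall l).map_comp p (V ⊓ U l) inf_le_right _
          ((hΦiso l).2.1.map_comp p (V ⊓ U l) inf_le_right _
            (hS₀.comp_res p V (V ⊓ U l) inf_le_left le_top x hx))
      obtain ⟨b, hb⟩ := hS₀'.filt_exhaust V le_top (F₀ V x)
      have hb' := hb
      rw [hS₀'.filt_comp_span b V le_top,
        Submodule.mem_iSup_iff_exists_finsupp] at hb'
      obtain ⟨f, hf, hsum⟩ := hb'
      have hrepr := finsupp_sub_single f p
      rw [hsum] at hrepr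
      have hzero : F₀ V x - f p = 0 := by
        refine hS₀'.filt_sep b V le_top (fun l => V ⊓ U l) (fun l => inf_le_left)
          (hcovV V) _ 0 (Submodule.sub_mem _ hb (hf p).2) (Submodule.zero_mem _) ?_
        intro l
        rw [map_zero]
        have h1 : S₀'.res (inf_le_left : V ⊓ U l ≤ V) (F₀ V x - f p)
            ∈ S₀'.comp p (V ⊓ U l) := by
          rw [map_sub]
          exact Submodule.sub_mem _ (hyloc l)
            (hS₀'.comp_res p V (V ⊓ U l) inf_le_left le_top _ (hf p).1)
        have h2 : S₀'.res (inf_le_left : V ⊓ U l ≤ V) (F₀ V x - f p)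
            ∈ ⨆ (q : ℤ × ℤ) (_ : q ≠ p), S₀'.comp q (V ⊓ U l) := by
          rw [hrepr, map_sum]
          exact Submodule.sum_mem _ fun q hq => Submodule.mem_iSup_of_mem q
            (Submodule.mem_iSup_of_mem (Finset.ne_of_mem_erase hq)
              (hS₀'.comp_res q V (V ⊓ U l) inf_le_left le_top _ (hf q).1))
        exact Submodule.disjoint_def.mp (hS₀'.comp_indep p (V ⊓ U l) le_top) _ h1 h2
      have heq : F₀ V x = f p := by rwa [sub_eq_zero] at hzero
      rw [heq]
      exact (hf p).1
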